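/- Let Φ be an irreducible root system with extended basis Δ' and the associated partial order ≤ on Φ (defined via the affine root system). Then: (1) the minimal elements of ≤ are exactly the elements of Δ'; (2) if α ≤ β then −β ≤ −α; (3) the restriction of ≤ to the set of positive roots (relative to Δ) coincides with the restriction of the usual dominance order relative to Δ. -/

import Mathlib

open Finset

/-- A based, irreducible, reduced root system in a Euclidean space, together with
coordinate data with respect to the base `Δ`, the highest root, and the
extended base `Δ' = Δ ∪ {-highest}`. -/
structure BasedRootSystem (V : Type*) [NormedAddCommGroup V] [InnerProductSpace ℝ V] where
  Φ : Finset V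
  zero_not_mem : (0 : V) ∉ Φ
  neg_mem : ∀ α ∈ Φ, -α ∈ Φ
  reduced : ∀ α ∈ Φ, ∀ c : ℝ, c • α ∈ Φ → c = 1 ∨ c = -1
  crystallographic : ∀ α ∈ Φ, ∀ β ∈ Φ, ∃ n : ℤ,
    2 * (inner ℝ α β : ℝ) / (inner ℝ α α : ℝ) = (n : ℝ)
  reflect_mem : ∀ α ∈ Φ, ∀ β ∈ Φ, β - (2 * (inner ℝ β α : ℝ) / (inner ℝ α α : ℝ)) • α ∈ Φ
  Δ : Finset V
  base_sub : Δ ⊆ Φ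
  indep : LinearIndependent ℝ (fun γ : Δ => (γ : V))
  coord : V → V → ℤ
  coord_zero : ∀ γ : V, coord 0 γ = 0
  coord_spec : ∀ α ∈ Φ, α = ∑ γ ∈ Δ, (coord α γ : ℝ) • γ
  coord_sign : ∀ α ∈ Φ, (∀ γ ∈ Δ, 0 ≤ coord α γ) ∨ (∀ γ ∈ Δ, coord α γ ≤ 0)
  highest : V
  highest_mem : highest ∈ Φ
  highest_pos : ∀ γ ∈ Δ, 1 ≤ coord highest γ
  highest_is_highest : ∀ α ∈ Φ, ∀ γ ∈ Δ, coord α γ ≤ coord highest γ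

namespace BasedRootSystem

variable {V : Type*} [NormedAddCommGroup V] [InnerProductSpace ℝ V] (B : BasedRootSystem V)

/-- `α` is positive relative to the base `Δ`. -/
def IsPos (α : V) : Prop := ∀ γ ∈ B.Δ, 0 ≤ B.coord α γ

/-- `ε_α` : `0` if `α` is positive, `1` otherwise. -/
noncomputable def eps (α : V) : ℤ := by
  classical exact if B.IsPos α then 0 else 1

/-- The extended base `Δ' = Δ ∪ {-α_M}`. -/
noncomputable def extBase : Finset V := by
  classical exact insert (-B.highest) B.Δ

/-- The Coxeter number: one plus the height of the highest root. -/
def cox : ℤ := (∑ γ ∈ B.Δ, B.coord B.highest γ) + 1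

/-- Coefficientwise order on affine roots `(α, n)`, via their decomposition in the
affine basis `Δ_aff`. -/
def affLe (p q : V × ℤ) : Prop :=
  p.2 ≤ q.2 ∧ ∀ γ ∈ B.Δ,
    B.coord p.1 γ + p.2 * B.coord B.highest γ ≤ B.coord q.1 γ + q.2 * B.coord B.highest γ

/-- The partial order on `Φ` induced from the affine root system:
`α ≤ β` iff `(α, v + ε_α) ≤ (β, v + ε_β)` coefficientwise for every `v`. -/
def rle (α β : V) : Prop := B.affLe (α, B.eps α) (β, B.eps β)

/-- `c` is a decomposition of `α` as a nonnegative integral combination of the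
extended base `Δ'`. -/
def IsDecomp (α : V) (c : V → ℕ) : Prop :=
  α = ∑ γ ∈ B.extBase, (c γ : ℝ) • γ

/-- The sum of the coefficients of a decomposition in `Δ'`. -/
noncomputable def decompSum (c : V → ℕ) : ℤ := ∑ γ ∈ B.extBase, (c γ : ℤ)

/-- A subset of `Φ` is `Δ'`-complete if it is downward closed for the order `rle`. -/
def Complete (Ψ : Set V) : Prop :=
  ∀ α ∈ Ψ, ∀ β ∈ B.Φ, B.rle β α → β ∈ Ψ

/-- The set of ratios `(Σ ε_{α_i})/t` over nonempty zero-sum families in `X`. -/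
noncomputable def ratioSet (X : Set V) : Set ℝ :=
  {q | ∃ (t : ℕ) (a : Fin t → V), 0 < t ∧ (∀ i, a i ∈ X) ∧ (∑ i, a i) = 0 ∧
        q = (∑ i, (B.eps (a i) : ℝ)) / (t : ℝ)}

end BasedRootSystem

/-! A root `α ∉ Δ'` is never minimal. If `⟨α, γ⟩ > 0` for some simple root `γ`, then reflecting
in `γ` gives a root `α - nγ` (`n ≥ 1`) of the same sign, which lies below `α`; the only way the
sign can change is for `α` to be a multiple of `γ`, i.e. `α = γ`. Otherwise `α` pairs nonpositively
with all of `Δ`, so it is negative and `⟨α, α_M⟩ < 0`; then `α + α_M` is a positive root whose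
affine coordinates `(α + α_M, 0)` agree with those of `(α, 1)`. Conversely the elements of `Δ'`
are minimal by a direct coordinate count. The symmetry `α ≤ β → -β ≤ -α` comes from
`ε_{-α} = 1 - ε_α`, and on positive roots `ε = 0`, so the order is the dominance order. -/

namespace BasedRootSystem

variable {V : Type*} [NormedAddCommGroup V] [InnerProductSpace ℝ V] (B : BasedRootSystem V)

section Coordinates

lemma coord_eq_of_repr {α : V} (hα : α ∈ B.Φ) (c : V → ℤ)
    (h : α = ∑ γ ∈ B.Δ, (c γ : ℝ) • γ) : ∀ γ ∈ B.Δ, B.coord α γ = c γ := by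
  have hzero : ∑ γ : B.Δ, ((B.coord α γ : ℝ) - c γ) • (γ : V) = 0 := by
    rw [Finset.sum_coe_sort B.Δ (fun γ => ((B.coord α γ : ℝ) - c γ) • γ)]
    simp only [sub_smul, sum_sub_distrib, ← B.coord_spec α hα, ← h, sub_self]
  intro γ hγ
  exact_mod_cast sub_eq_zero.mp (Fintype.linearIndependent_iff.mp B.indep _ hzero ⟨γ, hγ⟩)

lemma eq_of_coord_eq {α β : V} (hα : α ∈ B.Φ) (hβ : β ∈ B.Φ)
    (h : ∀ γ ∈ B.Δ, B.coord α γ = B.coord β γ) : α = β := by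
  rw [B.coord_spec α hα, B.coord_spec β hβ]
  exact sum_congr rfl fun γ hγ => by rw [h γ hγ]

lemma coord_simple [DecidableEq V] {γ₀ γ : V} (h₀ : γ₀ ∈ B.Δ) (hγ : γ ∈ B.Δ) :
    B.coord γ₀ γ = if γ = γ₀ then 1 else 0 := by
  refine B.coord_eq_of_repr (B.base_sub h₀) (fun γ => if γ = γ₀ then 1 else 0) ?_ γ hγ
  simp [ite_smul, h₀]

lemma coord_neg {α : V} (hα : α ∈ B.Φ) : ∀ γ ∈ B.Δ, B.coord (-α) γ = -B.coord α γ := by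
  refine B.coord_eq_of_repr (B.neg_mem α hα) _ ?_
  simp only [Int.cast_neg, neg_smul, sum_neg_distrib, ← B.coord_spec α hα]

lemma coord_add {α β : V} (hα : α ∈ B.Φ) (hβ : β ∈ B.Φ) (h : α + β ∈ B.Φ) :
    ∀ γ ∈ B.Δ, B.coord (α + β) γ = B.coord α γ + B.coord β γ := by
  refine B.coord_eq_of_repr h _ ?_
  simp only [Int.cast_add, add_smul, sum_add_distrib, ← B.coord_spec α hα, ← B.coord_spec β hβ]

lemma coord_sub_smul {α β : V} (hα : α ∈ B.Φ) (hβ : β ∈ B.Φ) (n : ℤ) (h : α - (n : ℝ) • β ∈ B.Φ) :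
    ∀ γ ∈ B.Δ, B.coord (α - (n : ℝ) • β) γ = B.coord α γ - n * B.coord β γ := by
  refine B.coord_eq_of_repr h _ ?_
  simp only [Int.cast_sub, Int.cast_mul, sub_smul, mul_smul, sum_sub_distrib, ← smul_sum,
    ← B.coord_spec α hα, ← B.coord_spec β hβ]

lemma exists_coord_ne_zero {α : V} (hα : α ∈ B.Φ) : ∃ γ ∈ B.Δ, B.coord α γ ≠ 0 := by
  by_contra! h
  refine B.zero_not_mem ?_
  rwa [B.coord_spec α hα, sum_eq_zero fun γ hγ => by simp [h γ hγ]] at hα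

lemma neg_coord_highest_le {α : V} (hα : α ∈ B.Φ) :
    ∀ γ ∈ B.Δ, -B.coord B.highest γ ≤ B.coord α γ := by
  intro γ hγ
  have := B.highest_is_highest (-α) (B.neg_mem α hα) γ hγ
  rw [B.coord_neg hα γ hγ] at this
  omega

lemma eq_of_isPos_of_coord_eq_zero {α γ₀ : V} (hα : α ∈ B.Φ) (hpos : B.IsPos α) (h₀ : γ₀ ∈ B.Δ)
    (hzero : ∀ γ ∈ B.Δ, γ ≠ γ₀ → B.coord α γ = 0) : α = γ₀ := by
  have hsmul : α = (B.coord α γ₀ : ℝ) • γ₀ := by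
    conv_lhs => rw [B.coord_spec α hα]
    exact sum_eq_single γ₀ (fun γ hγ hne => by simp [hzero γ hγ hne]) (absurd h₀)
  rcases B.reduced γ₀ (B.base_sub h₀) _ (hsmul ▸ hα) with h | h
  · rw [hsmul, h, one_smul]
  · have : B.coord α γ₀ = -1 := by exact_mod_cast h
    linarith [hpos γ₀ h₀]

end Coordinates

section Signs

lemma isPos_simple {γ₀ : V} (h₀ : γ₀ ∈ B.Δ) : B.IsPos γ₀ := by
  classical
  intro γ hγ
  rw [B.coord_simple h₀ hγ]
  split_ifs <;> omega

lemma coord_nonpos_of_not_isPos {α : V} (hα : α ∈ B.Φ) (h : ¬ B.IsPos α) :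
    ∀ γ ∈ B.Δ, B.coord α γ ≤ 0 :=
  (B.coord_sign α hα).resolve_left h

lemma isPos_neg_iff {α : V} (hα : α ∈ B.Φ) : B.IsPos (-α) ↔ ¬ B.IsPos α := by
  constructor
  · intro hneg hpos
    obtain ⟨γ, hγ, hne⟩ := B.exists_coord_ne_zero hα
    have := hneg γ hγ
    rw [B.coord_neg hα γ hγ] at this
    exact hne (by linarith [hpos γ hγ])
  · intro h γ hγ
    rw [B.coord_neg hα γ hγ]
    linarith [B.coord_nonpos_of_not_isPos hα h γ hγ]

lemma eps_of_isPos {α : V} (h : B.IsPos α) : B.eps α = 0 := by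
  simp [eps, h]

lemma eps_of_not_isPos {α : V} (h : ¬ B.IsPos α) : B.eps α = 1 := by
  simp [eps, h]

lemma eps_neg {α : V} (hα : α ∈ B.Φ) : B.eps (-α) = 1 - B.eps α := by
  by_cases h : B.IsPos α
  · rw [B.eps_of_not_isPos ((B.isPos_neg_iff hα).not.mpr (not_not.mpr h)), B.eps_of_isPos h]
    norm_num
  · rw [B.eps_of_isPos ((B.isPos_neg_iff hα).mpr h), B.eps_of_not_isPos h]
    norm_num

lemma rle_iff {α β : V} : B.rle α β ↔ B.eps α ≤ B.eps β ∧ ∀ γ ∈ B.Δ,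
    B.coord α γ + B.eps α * B.coord B.highest γ ≤ B.coord β γ + B.eps β * B.coord B.highest γ :=
  Iff.rfl

lemma rle_of_coord_le {α β : V} (hsign : B.IsPos β ↔ B.IsPos α)
    (hle : ∀ γ ∈ B.Δ, B.coord β γ ≤ B.coord α γ) : B.rle β α := by
  have heps : B.eps β = B.eps α := by unfold eps; split_ifs <;> tauto
  refine (B.rle_iff).mpr ⟨heps.le, fun γ hγ => ?_⟩
  rw [heps]
  linarith [hle γ hγ]

end Signs

section Geometry

lemma inner_self_pos {α : V} (hα : α ∈ B.Φ) : 0 < (inner ℝ α α : ℝ) :=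
  real_inner_self_pos.mpr fun h => B.zero_not_mem (h ▸ hα)

lemma exists_two_inner_eq_and_sub_smul_mem {α β : V} (hα : α ∈ B.Φ) (hβ : β ∈ B.Φ) :
    ∃ n : ℤ, 2 * (inner ℝ α β : ℝ) = n * inner ℝ β β ∧ α - (n : ℝ) • β ∈ B.Φ := by
  obtain ⟨n, hn⟩ := B.crystallographic β hβ α hα
  rw [real_inner_comm] at hn
  refine ⟨n, (div_eq_iff (B.inner_self_pos hβ).ne').mp hn, ?_⟩
  simpa only [hn] using B.reflect_mem β hβ α hα

lemma exists_sub_smul_mem_of_inner_pos {α β : V} (hα : α ∈ B.Φ) (hβ : β ∈ B.Φ)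
    (hpos : 0 < (inner ℝ α β : ℝ)) : ∃ n : ℤ, 1 ≤ n ∧ α - (n : ℝ) • β ∈ B.Φ := by
  obtain ⟨n, hn, hmem⟩ := B.exists_two_inner_eq_and_sub_smul_mem hα hβ
  have : (0 : ℝ) < n := pos_of_mul_pos_left (hn ▸ by linarith) (B.inner_self_pos hβ).le
  exact ⟨n, by exact_mod_cast this, hmem⟩

lemma inner_le_neg_inner_self_of_add_not_mem {α β : V} (hα : α ∈ B.Φ) (hβ : β ∈ B.Φ)
    (hneg : (inner ℝ α β : ℝ) < 0) (hsum : α + β ∉ B.Φ) :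
    (inner ℝ α β : ℝ) ≤ -inner ℝ β β := by
  obtain ⟨n, hn, hmem⟩ := B.exists_two_inner_eq_and_sub_smul_mem hα hβ
  have hn₀ : (n : ℝ) < 0 := neg_of_mul_neg_left (by linarith) (B.inner_self_pos hβ).le
  have hn₁ : n ≠ -1 := by
    rintro rfl
    exact hsum (by simpa [sub_eq_add_neg] using hmem)
  have hn₂ : (n : ℝ) ≤ -2 := by
    have : n < 0 := by exact_mod_cast hn₀
    exact_mod_cast (by omega : n ≤ -2)
  nlinarith [B.inner_self_pos hβ]

lemma add_mem_of_inner_neg {α β : V} (hα : α ∈ B.Φ) (hβ : β ∈ B.Φ) (hne : α ≠ -β)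
    (hneg : (inner ℝ α β : ℝ) < 0) : α + β ∈ B.Φ := by
  by_contra hsum
  have hαβ := B.inner_le_neg_inner_self_of_add_not_mem hα hβ hneg hsum
  have hβα := B.inner_le_neg_inner_self_of_add_not_mem hβ hα (by rwa [real_inner_comm])
    (by rwa [add_comm])
  rw [real_inner_comm] at hβα
  have : (inner ℝ (α + β) (α + β) : ℝ) ≤ 0 := by
    rw [real_inner_add_add_self]
    linarith
  exact hne (eq_neg_of_add_eq_zero_left (real_inner_self_nonpos.mp this))

lemma inner_sum_nonpos {α : V} (hα : ∀ γ ∈ B.Δ, (inner ℝ α γ : ℝ) ≤ 0) {c : V → ℝ}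
    (hc : ∀ γ ∈ B.Δ, 0 ≤ c γ) : (inner ℝ α (∑ γ ∈ B.Δ, c γ • γ) : ℝ) ≤ 0 := by
  rw [inner_sum]
  exact sum_nonpos fun γ hγ => by
    rw [real_inner_smul_right]; exact mul_nonpos_of_nonneg_of_nonpos (hc γ hγ) (hα γ hγ)

end Geometry

section Minimal

lemma exists_rle_ne_of_inner_simple_pos {α γ₀ : V} (hα : α ∈ B.Φ) (hΔ : α ∉ B.Δ) (h₀ : γ₀ ∈ B.Δ)
    (hpos : 0 < (inner ℝ α γ₀ : ℝ)) : ∃ β ∈ B.Φ, B.rle β α ∧ β ≠ α := by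
  classical
  obtain ⟨n, hn, hmem⟩ := B.exists_sub_smul_mem_of_inner_pos hα (B.base_sub h₀) hpos
  have hcoord : ∀ γ ∈ B.Δ,
      B.coord (α - (n : ℝ) • γ₀) γ = B.coord α γ - n * if γ = γ₀ then 1 else 0 :=
    fun γ hγ => by rw [B.coord_sub_smul hα (B.base_sub h₀) n hmem γ hγ, B.coord_simple h₀ hγ]
  have hcoord₀ := hcoord γ₀ h₀
  rw [if_pos rfl, mul_one] at hcoord₀
  refine ⟨_, hmem, B.rle_of_coord_le ?_ fun γ hγ => ?_, fun h => by rw [h] at hcoord₀; omega⟩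
  · constructor
    · intro hβ
      by_contra hα'
      linarith [hβ γ₀ h₀, B.coord_nonpos_of_not_isPos hα hα' γ₀ h₀]
    · intro hα'
      by_contra hβ
      have hzero : ∀ γ ∈ B.Δ, γ ≠ γ₀ → B.coord α γ = 0 := fun γ hγ hne => by
        have := B.coord_nonpos_of_not_isPos hmem hβ γ hγ
        rw [hcoord γ hγ, if_neg hne] at this
        linarith [hα' γ hγ]
      exact hΔ (B.eq_of_isPos_of_coord_eq_zero hα hα' h₀ hzero ▸ h₀)
  · rw [hcoord γ hγ]
    split_ifs <;> omega

lemma exists_rle_ne_of_inner_simple_nonpos {α : V} (hα : α ∈ B.Φ) (hH : α ≠ -B.highest)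
    (hnonpos : ∀ γ ∈ B.Δ, (inner ℝ α γ : ℝ) ≤ 0) : ∃ β ∈ B.Φ, B.rle β α ∧ β ≠ α := by
  have hneg : ¬ B.IsPos α := fun hpos => by
    have := B.inner_sum_nonpos hnonpos (c := fun γ => B.coord α γ) (fun γ hγ => by
      exact_mod_cast hpos γ hγ)
    rw [← B.coord_spec α hα] at this
    linarith [B.inner_self_pos hα]
  -- `α + α_M` has nonnegative coordinates, so `⟨α, α_M⟩ = ⟨α, α + α_M⟩ - ⟨α, α⟩ < 0`.
  have hinner : (inner ℝ α B.highest : ℝ) < 0 := by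
    have := B.inner_sum_nonpos hnonpos (c := fun γ => B.coord α γ + B.coord B.highest γ)
      (fun γ hγ => by exact_mod_cast (by linarith [B.neg_coord_highest_le hα γ hγ] :
        0 ≤ B.coord α γ + B.coord B.highest γ))
    simp only [add_smul, sum_add_distrib, ← B.coord_spec α hα,
      ← B.coord_spec B.highest B.highest_mem, inner_add_right] at this
    linarith [B.inner_self_pos hα]
  have hmem := B.add_mem_of_inner_neg hα B.highest_mem hH hinner
  have hcoord := B.coord_add hα B.highest_mem hmem
  have hpos : B.IsPos (α + B.highest) := fun γ hγ => by
    rw [hcoord γ hγ]; linarith [B.neg_coord_highest_le hα γ hγ]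
  refine ⟨_, hmem, (B.rle_iff).mpr ⟨?_, fun γ hγ => ?_⟩, fun h => ?_⟩
  · rw [B.eps_of_isPos hpos, B.eps_of_not_isPos hneg]; omega
  · rw [B.eps_of_isPos hpos, B.eps_of_not_isPos hneg, hcoord γ hγ]; omega
  · exact B.zero_not_mem (add_eq_left.mp h ▸ B.highest_mem)

lemma mem_extBase {α : V} : α ∈ B.extBase ↔ α = -B.highest ∨ α ∈ B.Δ := by
  simp [extBase]

lemma exists_rle_ne_of_not_mem_extBase {α : V} (hα : α ∈ B.Φ) (h : α ∉ B.extBase) :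
    ∃ β ∈ B.Φ, B.rle β α ∧ β ≠ α := by
  rw [mem_extBase, not_or] at h
  by_cases hpos : ∃ γ ∈ B.Δ, 0 < (inner ℝ α γ : ℝ)
  · obtain ⟨γ₀, h₀, hγ₀⟩ := hpos
    exact B.exists_rle_ne_of_inner_simple_pos hα h.2 h₀ hγ₀
  · push Not at hpos
    exact B.exists_rle_ne_of_inner_simple_nonpos hα h.1 hpos

lemma eq_of_rle_simple {β γ₀ : V} (hβ : β ∈ B.Φ) (h₀ : γ₀ ∈ B.Δ) (hle : B.rle β γ₀) :
    β = γ₀ := by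
  classical
  obtain ⟨heps, hcoord⟩ := (B.rle_iff).mp hle
  rw [B.eps_of_isPos (B.isPos_simple h₀)] at heps hcoord
  have hpos : B.IsPos β := by
    by_contra h; rw [B.eps_of_not_isPos h] at heps; omega
  have hcoord' : ∀ γ ∈ B.Δ, B.coord β γ ≤ if γ = γ₀ then 1 else 0 := fun γ hγ => by
    have := hcoord γ hγ
    rw [B.eps_of_isPos hpos, B.coord_simple h₀ hγ] at this
    omega
  have hzero : ∀ γ ∈ B.Δ, γ ≠ γ₀ → B.coord β γ = 0 := fun γ hγ hne => by
    have := hcoord' γ hγ; rw [if_neg hne] at this; linarith [hpos γ hγ]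
  exact B.eq_of_isPos_of_coord_eq_zero hβ hpos h₀ hzero

lemma eq_of_rle_neg_highest {β : V} (hβ : β ∈ B.Φ) (hle : B.rle β (-B.highest)) :
    β = -B.highest := by
  have hneg : ¬ B.IsPos (-B.highest) := fun h =>
    (B.isPos_neg_iff B.highest_mem).mp h fun γ hγ => by linarith [B.highest_pos γ hγ]
  have hcoord := ((B.rle_iff).mp hle).2
  rw [B.eps_of_not_isPos hneg] at hcoord
  by_cases hpos : B.IsPos β
  · obtain ⟨γ, hγ, hne⟩ := B.exists_coord_ne_zero hβ
    have := hcoord γ hγ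
    rw [B.eps_of_isPos hpos, B.coord_neg B.highest_mem γ hγ] at this
    have := hpos γ hγ
    omega
  · refine B.eq_of_coord_eq hβ (B.neg_mem _ B.highest_mem) fun γ hγ => ?_
    have := hcoord γ hγ
    rw [B.eps_of_not_isPos hpos, B.coord_neg B.highest_mem γ hγ] at this
    rw [B.coord_neg B.highest_mem γ hγ]
    linarith [B.neg_coord_highest_le hβ γ hγ]

lemma minimal_iff_mem_extBase {α : V} (hα : α ∈ B.Φ) :
    (∀ β ∈ B.Φ, B.rle β α → β = α) ↔ α ∈ B.extBase := by
  refine ⟨fun hmin => by_contra fun h => ?_, fun h β hβ hle => ?_⟩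
  · obtain ⟨β, hβ, hle, hne⟩ := B.exists_rle_ne_of_not_mem_extBase hα h
    exact hne (hmin β hβ hle)
  · rcases (B.mem_extBase).mp h with rfl | h₀
    · exact B.eq_of_rle_neg_highest hβ hle
    · exact B.eq_of_rle_simple hβ h₀ hle

end Minimal

lemma rle_neg_neg {α β : V} (hα : α ∈ B.Φ) (hβ : β ∈ B.Φ) (h : B.rle α β) :
    B.rle (-β) (-α) := by
  obtain ⟨heps, hcoord⟩ := (B.rle_iff).mp h
  refine (B.rle_iff).mpr ⟨by rw [B.eps_neg hα, B.eps_neg hβ]; omega, fun γ hγ => ?_⟩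
  rw [B.eps_neg hα, B.eps_neg hβ, B.coord_neg hα γ hγ, B.coord_neg hβ γ hγ]
  linarith [hcoord γ hγ]

lemma rle_iff_coord_le_of_isPos {α β : V} (hα : B.IsPos α) (hβ : B.IsPos β) :
    B.rle α β ↔ ∀ γ ∈ B.Δ, B.coord α γ ≤ B.coord β γ := by
  simp [rle_iff, B.eps_of_isPos hα, B.eps_of_isPos hβ]

end BasedRootSystem

/-- (1) the minimal elements of the order `≤` on `Φ` are exactly the
elements of `Δ'`; (2) `α ≤ β` implies `-β ≤ -α`; (3) on positive roots, `≤`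
coincides with the dominance order relative to `Δ`. -/
theorem stmt4 {V : Type*} [NormedAddCommGroup V] [InnerProductSpace ℝ V]
    (B : BasedRootSystem V) :
    (∀ α ∈ B.Φ, ((∀ β ∈ B.Φ, B.rle β α → β = α) ↔ α ∈ B.extBase)) ∧
    (∀ α ∈ B.Φ, ∀ β ∈ B.Φ, B.rle α β → B.rle (-β) (-α)) ∧
    (∀ α ∈ B.Φ, ∀ β ∈ B.Φ, B.IsPos α → B.IsPos β →
      (B.rle α β ↔ ∀ γ ∈ B.Δ, B.coord α γ ≤ B.coord β γ)) :=
  ⟨fun _ hα => B.minimal_iff_mem_extBase hα,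
    fun _ hα _ hβ => B.rle_neg_neg hα hβ,
    fun _ _ _ _ => B.rle_iff_coord_le_of_isPos⟩
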